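/- Absorption property: if S is a left shelf generated by an element g, then for every a ∈ S there exists N such that for all n ≥ N, a ◃ g^[n] = g^[n+1]. -/
import Mathlib

/-- The sub-shelf of a left shelf generated by `g`: the smallest subset
containing `g` and closed under the operation, as an inductive predicate. -/
inductive ShelfClosure {S : Type*} [Shelf S] (g : S) : S → Prop
  | base : ShelfClosure g g
  | act {a b : S} : ShelfClosure g a → ShelfClosure g b → ShelfClosure g (Shelf.act a b)

/-- Right powers in a left shelf: `g^[1] = g` and `g^[n+1] = g ◃ g^[n]`
(the value at `0` is a junk value). -/
def rightPow {S : Type*} [Shelf S] (g : S) : ℕ → S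
  | 0 => g
  | 1 => g
  | n + 2 => Shelf.act g (rightPow g (n + 1))

/-- absorption property: if `S` is a left shelf generated by an
element `g`, then for every `a ∈ S` there exists `N ≥ 1` such that for all
`n ≥ N`, `a ◃ g^[n] = g^[n+1]`. -/
theorem shelf_absorption {S : Type*} [Shelf S] (g : S)
    (hgen : ∀ a : S, ShelfClosure g a) (a : S) :
    ∃ N : ℕ, 1 ≤ N ∧ ∀ n ≥ N, Shelf.act a (rightPow g n) = rightPow g (n + 1) := by
  induction hgen a with
  | base =>
    refine ⟨1, le_refl 1, fun n hn => ?_⟩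
    match n, hn with
    | m + 1, _ => rfl
  | @act b c hb hc ihb ihc =>
    obtain ⟨Nb, hNb1, hb'⟩ := ihb
    obtain ⟨Nc, hNc1, hc'⟩ := ihc
    refine ⟨max Nb Nc + 1, by omega, fun n hn => ?_⟩
    obtain ⟨m, rfl⟩ : ∃ m, n = m + 1 := ⟨n - 1, by omega⟩
    have h1 := Shelf.self_distrib (x := b) (y := c) (z := rightPow g m)
    rw [hc' m (by omega), hb' m (by omega)] at h1
    rw [← h1, hb' (m + 1) (by omega)]
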